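/- Let A, B ∈ ℝ^{k×k} and let ‖·‖₂ denote the spectral (operator) norm. Then |det(A) − det(B)| ≤ k ‖A − B‖₂ max(‖A‖₂, ‖B‖₂)^{k−1}. -/

import Mathlib

/-!
Hadamard's inequality `|det (v₁, …, vₖ)| ≤ ∏ ‖vᵢ‖` says that the determinant, as a multilinear
function of the columns, has norm at most `1`. The telescoping bound for multilinear maps then
gives `|D v - D w| ≤ k max(‖v‖, ‖w‖)^{k-1} ‖v - w‖` (sup norm over columns), and each column
`A eⱼ` of a matrix has Euclidean norm at most its spectral norm.
-/

open Matrix Module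

theorem OrthonormalBasis.abs_det_apply_le {E : Type*} [NormedAddCommGroup E]
    [InnerProductSpace ℝ E] {n : ℕ} (b : OrthonormalBasis (Fin n) ℝ E) (v : Fin n → E) :
    |b.toBasis.det v| ≤ ∏ i, ‖v i‖ := by
  have : Fact (finrank ℝ E = n) := ⟨by simpa using finrank_eq_card_basis b.toBasis⟩
  rw [← b.toBasis.orientation.volumeForm_robust' b]
  exact b.toBasis.orientation.abs_volumeForm_apply_le v

theorem OrthonormalBasis.abs_det_sub_det_le {E : Type*} [NormedAddCommGroup E]
    [InnerProductSpace ℝ E] {n : ℕ} (b : OrthonormalBasis (Fin n) ℝ E) (v w : Fin n → E) :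
    |b.toBasis.det v - b.toBasis.det w| ≤ n * max ‖v‖ ‖w‖ ^ (n - 1) * ‖v - w‖ := by
  simpa using b.toBasis.det.toMultilinearMap.norm_image_sub_le_of_bound zero_le_one
    (fun v => by simpa using b.abs_det_apply_le v) v w

namespace Matrix

variable {n : ℕ}

def euclideanCols (A : Matrix (Fin n) (Fin n) ℝ) : Fin n → EuclideanSpace ℝ (Fin n) :=
  fun j => WithLp.toLp 2 (Aᵀ j)

theorem euclideanCols_sub (A B : Matrix (Fin n) (Fin n) ℝ) :
    euclideanCols (A - B) = euclideanCols A - euclideanCols B := rfl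

theorem det_eq_basisFun_det_euclideanCols (A : Matrix (Fin n) (Fin n) ℝ) :
    A.det = (EuclideanSpace.basisFun (Fin n) ℝ).toBasis.det (euclideanCols A) := by
  rw [Basis.det_apply]
  congr 1

theorem norm_euclideanCols_apply_le (A : Matrix (Fin n) (Fin n) ℝ) (j : Fin n) :
    ‖euclideanCols A j‖ ≤ ‖toEuclideanCLM (𝕜 := ℝ) A‖ := by
  have hcol : euclideanCols A j = toEuclideanCLM (𝕜 := ℝ) A (WithLp.toLp 2 (Pi.single j 1)) := by
    rw [toEuclideanCLM_toLp, mulVec_single_one]; rfl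
  simpa [hcol] using (toEuclideanCLM (𝕜 := ℝ) A).le_opNorm (WithLp.toLp 2 (Pi.single j 1))

theorem norm_euclideanCols_le (A : Matrix (Fin n) (Fin n) ℝ) :
    ‖euclideanCols A‖ ≤ ‖toEuclideanCLM (𝕜 := ℝ) A‖ :=
  (pi_norm_le_iff_of_nonneg (norm_nonneg _)).2 (norm_euclideanCols_apply_le A)

end Matrix

theorem stmt_13_general (k : ℕ) (A B : Matrix (Fin k) (Fin k) ℝ) :
    |A.det - B.det|
      ≤ (k : ℝ) * ‖Matrix.toEuclideanCLM (𝕜 := ℝ) (A - B)‖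
          * max ‖Matrix.toEuclideanCLM (𝕜 := ℝ) A‖ ‖Matrix.toEuclideanCLM (𝕜 := ℝ) B‖
              ^ (k - 1) := by
  rw [det_eq_basisFun_det_euclideanCols A, det_eq_basisFun_det_euclideanCols B]
  calc _ ≤ k * max ‖euclideanCols A‖ ‖euclideanCols B‖ ^ (k - 1)
          * ‖euclideanCols A - euclideanCols B‖ :=
        OrthonormalBasis.abs_det_sub_det_le _ _ _
    _ ≤ k * max ‖toEuclideanCLM (𝕜 := ℝ) A‖ ‖toEuclideanCLM (𝕜 := ℝ) B‖ ^ (k - 1)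
          * ‖toEuclideanCLM (𝕜 := ℝ) (A - B)‖ := by
        rw [← euclideanCols_sub]
        gcongr <;> exact norm_euclideanCols_le _
    _ = _ := by ring

/-- Determinant perturbation inequality (Ipsen–Rehman):
`|det A - det B| ≤ k ‖A - B‖₂ max(‖A‖₂, ‖B‖₂)^{k-1}`, where `‖·‖₂` is the spectral
(operator) norm of a matrix, realized via `Matrix.toEuclideanCLM`. -/
theorem stmt_13 (k : ℕ) (hk : 1 ≤ k) (A B : Matrix (Fin k) (Fin k) ℝ) :
    |A.det - B.det|
      ≤ (k : ℝ) * ‖Matrix.toEuclideanCLM (𝕜 := ℝ) (A - B)‖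
          * max ‖Matrix.toEuclideanCLM (𝕜 := ℝ) A‖ ‖Matrix.toEuclideanCLM (𝕜 := ℝ) B‖
              ^ (k - 1) :=
  stmt_13_general k A B
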